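/- For any two equal-length strings X and Y over a linearly ordered alphabet, X and Y Cartesian-tree match (their Cartesian trees are isomorphic as ordered trees) if and only if PD_X = PD_Y, where PD is the parent-distance encoding. -/

import Mathlib

/-- unlabeled ordered binary trees -/
inductive BT : Type
  | leaf : BT
  | node : BT → BT → BT
deriving DecidableEq

/-- Cartesian tree, computed with a fuel argument (fuel `≥` length suffices). -/
def ctAux {α : Type*} [LinearOrder α] : ℕ → List α → BT
  | 0, _ => .leaf
  | _, [] => .leaf
  | n + 1, x :: xs =>
    let l := x :: xs
    let i := l.idxOf (xs.foldl min x)   -- leftmost position of the minimum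
    .node (ctAux n (l.take i)) (ctAux n (l.drop (i + 1)))

/-- the Cartesian tree `CT(l)` of a string `l`. -/
def ctree {α : Type*} [LinearOrder α] (l : List α) : BT :=
  ctAux l.length l

/-- parent-distance value at (0-indexed) position `p`. -/
def pdAt {α : Type*} [LinearOrder α] [Inhabited α] (T : List α) (p : ℕ) : ℕ :=
  match ((List.range p).filter (fun q => T.getD q default ≤ T.getD p default)).max? with
  | some q => p - q
  | none => 0

/-- the parent-distance encoding `PD_T` of `T`. -/
def pd {α : Type*} [LinearOrder α] [Inhabited α] (T : List α) : List ℕ :=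
  (List.range T.length).map (pdAt T)

/-!
The root of `CT(T)` is the leftmost minimum `T[i]`: nothing before it is `≤ T[i]`, so
`PD_T[i] = 0`. Positions before `i` only look at the prefix, and a position `i + 1 + p` of the
suffix `S` keeps its parent distance in `S`, except that `PD_S[p] = 0` (no `≤`-predecessor inside
`S`) becomes `p + 1`, the distance to the root. So `PD_T` is a function of `CT(T)`, given by
the recursive code `toPD (node L R) = toPD L ++ 0 :: fillZeros (toPD R)`. This code is injective:
the root is its last zero, and `fillZeros` is injective on lists whose `p`-th entry is at most `p`.
-/

open List

/-- Parent distances of a right subtree, re-read in the whole string: a `0` at position `p`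
becomes the distance `p + 1` to the root. -/
def fillZeros (l : List ℕ) : List ℕ :=
  l.mapIdx fun p v => if v = 0 then p + 1 else v

@[simp] lemma length_fillZeros (l : List ℕ) : (fillZeros l).length = l.length :=
  length_mapIdx

lemma getElem_fillZeros (l : List ℕ) (p : ℕ) (hp : p < (fillZeros l).length) :
    (fillZeros l)[p] =
      if l[p]'(by simpa using hp) = 0 then p + 1 else l[p]'(by simpa using hp) :=
  getElem_mapIdx

lemma zero_notMem_fillZeros (l : List ℕ) : 0 ∉ fillZeros l := by
  intro h
  obtain ⟨p, hp, hzero⟩ := mem_iff_getElem.1 h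
  rw [getElem_fillZeros] at hzero
  split at hzero <;> omega

lemma fillZeros_map_range (m : ℕ) (f : ℕ → ℕ) :
    fillZeros ((range m).map f) = (range m).map fun p => if f p = 0 then p + 1 else f p := by
  apply ext_getElem <;> simp [fillZeros]

lemma eq_of_fillZeros_eq {l l' : List ℕ} (hl : ∀ p (hp : p < l.length), l[p] ≤ p)
    (hl' : ∀ p (hp : p < l'.length), l'[p] ≤ p) (h : fillZeros l = fillZeros l') : l = l' := by
  have hlen : l.length = l'.length := by simpa using congrArg length h
  refine ext_getElem hlen fun p hp hp' => ?_
  have hp_eq := getElem_of_eq h (by simpa using hp)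
  rw [getElem_fillZeros, getElem_fillZeros] at hp_eq
  have := hl p hp
  have := hl' p hp'
  split at hp_eq <;> split at hp_eq <;> omega

lemma List.append_cons_inj_of_notMem_right {β : Type*} {u v u' v' : List β} {a : β}
    (hv : a ∉ v) (hv' : a ∉ v') : u ++ a :: v = u' ++ a :: v' ↔ u = u' ∧ v = v' := by
  refine ⟨fun h => ?_, by rintro ⟨rfl, rfl⟩; rfl⟩
  simp only [append_eq_append_iff, cons_eq_append_iff, cons_eq_cons] at h
  rcases h with ⟨c, rfl, h | ⟨d, rfl, rfl⟩⟩ | ⟨c, rfl, h | ⟨d, rfl, rfl⟩⟩ <;>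
    simp_all

namespace BT

def toPD : BT → List ℕ
  | leaf => []
  | node L R => L.toPD ++ 0 :: fillZeros R.toPD

lemma getElem_toPD_le : ∀ (t : BT) (p : ℕ) (hp : p < t.toPD.length), t.toPD[p] ≤ p
  | leaf, p, hp => by simp [toPD] at hp
  | node L R, p, hp => by
    simp only [toPD, getElem_append, getElem_cons, getElem_fillZeros]
    split
    · exact getElem_toPD_le L p _
    split
    · omega
    have := getElem_toPD_le R (p - L.toPD.length - 1) (by simp [toPD] at hp; omega)
    split <;> omega

theorem toPD_injective : Function.Injective toPD
  | leaf, leaf, _ => rfl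
  | leaf, node _ _, h | node _ _, leaf, h => by simp [toPD] at h
  | node L R, node L' R', h => by
    obtain ⟨hL, hR⟩ := (append_cons_inj_of_notMem_right (zero_notMem_fillZeros _)
      (zero_notMem_fillZeros _)).1 h
    rw [toPD_injective hL,
      toPD_injective (eq_of_fillZeros_eq (getElem_toPD_le R) (getElem_toPD_le R') hR)]

end BT

section CartesianTree

variable {α : Type*} [LinearOrder α]

lemma ctAux_nil (n : ℕ) : ctAux n ([] : List α) = .leaf := by
  cases n <;> rfl

lemma ctAux_congr_fuel : ∀ {n n' : ℕ} {l : List α}, l.length ≤ n → l.length ≤ n' →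
    ctAux n l = ctAux n' l
  | _, _, [], _, _ => by rw [ctAux_nil, ctAux_nil]
  | 0, _, _ :: _, h, _ | _ + 1, 0, _ :: _, _, h => absurd h (by simp)
  | n + 1, n' + 1, x :: xs, h, h' => by
    have hi : (x :: xs).idxOf (xs.foldl min x) < xs.length + 1 :=
      idxOf_lt_length_of_mem (min?_mem min?_cons')
    simp only [length_cons] at h h'
    simp only [ctAux]
    congr 1 <;> apply ctAux_congr_fuel <;> simp <;> omega

lemma ctree_eq_node {l : List α} {m : α} (hm : l.min? = some m) :
    ctree l = .node (ctree (l.take (l.idxOf m))) (ctree (l.drop (l.idxOf m + 1))) := by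
  obtain _ | ⟨x, xs⟩ := l
  · simp at hm
  · obtain rfl : xs.foldl min x = m := Option.some_inj.1 (min?_cons'.symm.trans hm)
    have hi := idxOf_lt_length_of_mem (min?_mem hm)
    simp only [length_cons] at hi
    simp only [ctree, length_cons, ctAux]
    congr 1 <;>
      exact ctAux_congr_fuel (by simp only [length_take, length_drop, length_cons]; omega) le_rfl

variable [Inhabited α]

structure IsLeftmostMin (l : List α) (i : ℕ) : Prop where
  lt_length : i < l.length
  le_getD : ∀ q < l.length, l.getD i default ≤ l.getD q default
  lt_getD : ∀ q < i, l.getD i default < l.getD q default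

lemma isLeftmostMin_idxOf {l : List α} {m : α} (hm : l.min? = some m) :
    IsLeftmostMin l (l.idxOf m) := by
  obtain ⟨hmem, hle⟩ := min?_eq_some_iff.1 hm
  have hi := idxOf_lt_length_of_mem hmem
  have hget : l.getD (l.idxOf m) default = m := by rw [getD_eq_getElem _ _ hi, getElem_idxOf]
  refine ⟨hi, fun q hq => ?_, fun q hq => ?_⟩
  · rw [hget, getD_eq_getElem _ _ hq]
    exact hle _ (getElem_mem _)
  · rw [hget, getD_eq_getElem _ _ (hq.trans hi)]
    have hne : l[q] ≠ m := by simpa using not_of_lt_findIdx hq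
    exact lt_of_le_of_ne (hle _ (getElem_mem _)) hne.symm

end CartesianTree

section ParentDistance

variable {α : Type*} [LinearOrder α] [Inhabited α]

lemma pdAt_eq_zero {T : List α} {p : ℕ} (h : ∀ q < p, T.getD p default < T.getD q default) :
    pdAt T p = 0 := by
  have : (range p).filter (fun q => T.getD q default ≤ T.getD p default) = [] :=
    filter_eq_nil_iff.2 fun q hq => by simpa using h q (mem_range.1 hq)
  rw [pdAt, this]
  rfl

lemma pdAt_eq_sub {T : List α} {p q : ℕ} (hqp : q < p)
    (hq : T.getD q default ≤ T.getD p default)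
    (hgt : ∀ r, q < r → r < p → T.getD p default < T.getD r default) :
    pdAt T p = p - q := by
  have : ((range p).filter (fun q => T.getD q default ≤ T.getD p default)).max? = some q := by
    refine max?_eq_some_iff.2 ⟨by simpa [hqp] using hq, fun r hr => ?_⟩
    simp only [mem_filter, mem_range, decide_eq_true_eq] at hr
    by_contra! hqr
    exact (hgt r hqr hr.1).not_ge hr.2
  rw [pdAt, this]

lemma forall_lt_or_exists_nearest_le (T : List α) (p : ℕ) :
    (∀ q < p, T.getD p default < T.getD q default) ∨
      ∃ q < p, T.getD q default ≤ T.getD p default ∧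
        ∀ r, q < r → r < p → T.getD p default < T.getD r default := by
  obtain h | h :=
    ((Finset.range p).filter fun q => T.getD q default ≤ T.getD p default).eq_empty_or_nonempty
  · refine .inl fun q hq => lt_of_not_ge fun hle => ?_
    exact Finset.filter_eq_empty_iff.1 h (Finset.mem_range.2 hq) hle
  obtain ⟨q, hq, hmax⟩ := Finset.exists_max_image _ id h
  simp only [Finset.mem_filter, Finset.mem_range, id] at hq hmax
  exact .inr ⟨q, hq.1, hq.2,
    fun r hqr hrp => lt_of_not_ge fun hle => (hmax r ⟨hrp, hle⟩).not_gt hqr⟩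

lemma pdAt_take {l : List α} {n p : ℕ} (hp : p < n) : pdAt (l.take n) p = pdAt l p := by
  have hget : ∀ q < n, (l.take n).getD q default = l.getD q default := fun q hq => by
    simp [getD_eq_getElem?_getD, hq]
  unfold pdAt
  rw [filter_congr fun q hq => by rw [hget q ((mem_range.1 hq).trans hp), hget p hp]]

lemma pdAt_add_of_isLeftmostMin {l : List α} {i : ℕ} (hi : IsLeftmostMin l i) {p : ℕ}
    (hp : i + 1 + p < l.length) :
    pdAt l (i + 1 + p) =
      if pdAt (l.drop (i + 1)) p = 0 then p + 1 else pdAt (l.drop (i + 1)) p := by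
  have hS : ∀ q, (l.drop (i + 1)).getD q default = l.getD (i + 1 + q) default := fun q => by
    simp [getD_eq_getElem?_getD, getElem?_drop]
  rcases forall_lt_or_exists_nearest_le (l.drop (i + 1)) p with hroot | ⟨q, hqp, hq, hgt⟩
  · rw [pdAt_eq_zero hroot, if_pos rfl]
    refine (pdAt_eq_sub (by omega) (hi.le_getD _ hp) fun r hir hrp => ?_).trans (by omega)
    obtain ⟨r, rfl⟩ := Nat.exists_eq_add_of_lt hir
    simpa only [hS, show i + 1 + r = i + r + 1 by omega] using hroot r (by omega)
  · rw [pdAt_eq_sub hqp hq hgt, if_neg (by omega)]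
    rw [hS, hS] at hq
    refine (pdAt_eq_sub (by omega) hq fun r hqr hrp => ?_).trans (by omega)
    obtain ⟨r, rfl⟩ := Nat.exists_eq_add_of_le (show i + 1 ≤ r by omega)
    simpa only [hS] using hgt r (by omega) (by omega)

lemma pd_eq_of_isLeftmostMin {l : List α} {i : ℕ} (hi : IsLeftmostMin l i) :
    pd l = pd (l.take i) ++ 0 :: fillZeros (pd (l.drop (i + 1))) := by
  obtain ⟨m, hm⟩ := Nat.exists_eq_add_of_lt hi.lt_length
  have htake : (l.take i).length = i := by simp; omega
  have hdrop : (l.drop (i + 1)).length = m := by simp; omega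
  rw [pd, pd, pd, htake, hdrop, hm, add_assoc, range_add, range_succ_eq_map, fillZeros_map_range]
  simp only [map_append, map_cons, map_map]
  congr 1
  · exact map_congr_left fun p hp => (pdAt_take (mem_range.1 hp)).symm
  · congr 1
    · exact pdAt_eq_zero hi.lt_getD
    · refine map_congr_left fun p hp => ?_
      show pdAt l (i + (p + 1)) = _
      rw [← add_assoc, add_right_comm]
      exact pdAt_add_of_isLeftmostMin hi (by simp at hp; omega)

lemma BT.toPD_ctree (l : List α) : (ctree l).toPD = pd l := by
  cases hm : l.min? with
  | none => rw [min?_eq_none_iff.1 hm]; rfl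
  | some m =>
    have := (isLeftmostMin_idxOf hm).lt_length
    rw [ctree_eq_node hm, toPD, toPD_ctree, toPD_ctree,
      pd_eq_of_isLeftmostMin (isLeftmostMin_idxOf hm)]
termination_by l.length
decreasing_by all_goals simp; omega

end ParentDistance

theorem stmt8_general {α : Type*} [LinearOrder α] [Inhabited α] (X Y : List α) :
    ctree X = ctree Y ↔ pd X = pd Y := by
  rw [← BT.toPD_ctree X, ← BT.toPD_ctree Y]
  exact BT.toPD_injective.eq_iff.symm

theorem stmt8 {α : Type*} [LinearOrder α] [Inhabited α] (X Y : List α)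
    (h : X.length = Y.length) :
    ctree X = ctree Y ↔ pd X = pd Y :=
  stmt8_general X Y
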